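/- arXiv:1207.1125 — 2 statements merged into one kernel-verified Lean document; each statement's English description precedes it below -/
import Mathlib

section
/- Let c solve i·c' = βA₁c and define b₁ = (β/i)(∫_{T_i}^{T_f} A₁(s)ds)c(T_f) and b₂ = −(β/i)∫_{T_i}^{T_f}(∫_{T_i}^s A₁(s')ds')c'(s)ds. Then c(T_f) − c(T_i) = b₁ + b₂ (integration by parts decomposition), and if ‖∫_{T_i}^{t}A₁(s)ds‖ ≤ C(β^{−1/2}+β^{1/2}(t−T_i)) and ‖A₁(t)‖ ≤ M with ‖c(t)‖ ≤ 1, then ‖b₁‖ ≤ Cβ(β^{−1/2}+β^{1/2}|T_f−T_i|) and ‖b₂‖ ≤ Cβ^{3/2}(|T_f−T_i| + β|T_f−T_i|²). -/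
/-!
Since `c' = -iβ A₁ c`, the increment `c T_f - c T_i = ∫ c'` equals `-iβ ∫ A₁ c`. Integrating by
parts against the primitive `B t = ∫_{T_i}^t A₁`, which vanishes at `T_i`, gives the decomposition.
The bounds then follow from `‖B t‖ ≤ C (β^{-1/2} + β^{1/2} (T_f - T_i))` on the interval together
with `‖c‖ ≤ 1` and `‖c'‖ ≤ β M`.
-/

open scoped Real
open MeasureTheory intervalIntegral Filter

noncomputable section

abbrev Hs (N : ℕ) : Type := EuclideanSpace ℂ (Fin N)
abbrev Lop (N : ℕ) : Type := Hs N →L[ℂ] Hs N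

open Set Topology

theorem norm_integral_clm_apply_le {𝕜 E F : Type*} [NontriviallyNormedField 𝕜]
    [NormedAddCommGroup E] [NormedSpace 𝕜 E] [NormedAddCommGroup F] [NormedSpace 𝕜 F]
    [NormedSpace ℝ F] {f : ℝ → E →L[𝕜] F} {g : ℝ → E} {a b K L : ℝ}
    (hab : a ≤ b) (hf : ∀ t ∈ Icc a b, ‖f t‖ ≤ K) (hg : ∀ t ∈ Icc a b, ‖g t‖ ≤ L) :
    ‖∫ t in a..b, f t (g t)‖ ≤ K * L * (b - a) := by
  have h := norm_integral_le_of_norm_le_const fun t (ht : t ∈ uIoc a b) =>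
    have ht : t ∈ Icc a b := Ioc_subset_Icc_self (uIoc_of_le hab ▸ ht)
    (f t).le_of_opNorm_le_of_le (hf t ht) (hg t ht)
  rwa [abs_of_nonneg (sub_nonneg.2 hab)] at h

section Parts

variable {𝕜 E F : Type*} [NontriviallyNormedField 𝕜] [NormedAlgebra ℝ 𝕜]
  [NormedAddCommGroup E] [NormedSpace 𝕜 E] [NormedSpace ℝ E] [IsScalarTower ℝ 𝕜 E]
  [NormedAddCommGroup F] [NormedSpace 𝕜 F] [NormedSpace ℝ F] [IsScalarTower ℝ 𝕜 F]

theorem HasDerivAt.clm_apply_of_isScalarTower {B : ℝ → E →L[𝕜] F} {B' : E →L[𝕜] F}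
    {u : ℝ → E} {u' : E} {x : ℝ} (hB : HasDerivAt B B' x) (hu : HasDerivAt u u' x) :
    HasDerivAt (fun t => B t (u t)) (B' (u x) + B x u') x :=
  ((ContinuousLinearMap.restrictScalarsL 𝕜 E F ℝ ℝ).hasFDerivAt.comp_hasDerivAt x hB).clm_apply hu

variable [CompleteSpace F] {u u' : ℝ → E} {a b : ℝ}

theorem integral_clm_apply_eq_primitive_sub {A : ℝ → E →L[𝕜] F} (hab : a ≤ b)
    (hA : ContinuousOn A (Icc a b))
    (hu : ∀ t ∈ Icc a b, HasDerivWithinAt u (u' t) (Icc a b) t)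
    (hu' : ContinuousOn u' (Icc a b)) :
    ∫ t in a..b, A t (u t) =
      (∫ t in a..b, A t) (u b) - ∫ t in a..b, (∫ r in a..t, A r) (u' t) := by
  have hI : uIcc a b = Icc a b := uIcc_of_le hab
  have hAint : IntervalIntegrable A volume a b := (hA.mono hI.subset).intervalIntegrable
  have hB : ContinuousOn (fun t => ∫ r in a..t, A r) (Icc a b) :=
    hI ▸ continuousOn_primitive_interval' hAint left_mem_uIcc
  have hu_cont : ContinuousOn u (Icc a b) := fun t ht => (hu t ht).continuousWithinAt
  have hAu : ContinuousOn (fun t => A t (u t)) (Icc a b) := hA.clm_apply hu_cont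
  have hBu' : ContinuousOn (fun t => (∫ r in a..t, A r) (u' t)) (Icc a b) := hB.clm_apply hu'
  have hftc : ∫ t in a..b, (A t (u t) + (∫ r in a..t, A r) (u' t)) =
      (∫ t in a..b, A t) (u b) := by
    rw [integral_eq_sub_of_hasDerivAt_of_le hab (hB.clm_apply hu_cont), integral_same,
      zero_apply, sub_zero]
    · intro t ht
      have hnhds : Icc a b ∈ 𝓝 t := Icc_mem_nhds ht.1 ht.2
      exact HasDerivAt.clm_apply_of_isScalarTower
        (integral_hasDerivAt_right
          ((hA.mono (Icc_subset_Icc_right ht.2.le)).intervalIntegrable_of_Icc ht.1.le)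
          ((hA.mono Ioo_subset_Icc_self).stronglyMeasurableAtFilter isOpen_Ioo t ht)
          (hA.continuousAt hnhds))
        ((hu t (Ioo_subset_Icc_self ht)).hasDerivAt hnhds)
    · exact ((hAu.add hBu').mono hI.subset).intervalIntegrable
  rw [eq_sub_iff_add_eq, ← hftc, intervalIntegral.integral_add]
  · exact (hAu.mono hI.subset).intervalIntegrable
  · exact (hBu'.mono hI.subset).intervalIntegrable

theorem sub_eq_smul_primitive_apply_sub [CompleteSpace E] {A : ℝ → E →L[𝕜] E} (κ : 𝕜)
    (hab : a ≤ b) (hA : ContinuousOn A (Icc a b))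
    (hu : ∀ t ∈ Icc a b, HasDerivWithinAt u (u' t) (Icc a b) t)
    (hu' : ContinuousOn u' (Icc a b)) (hode : ∀ t ∈ Icc a b, u' t = κ • A t (u t)) :
    u b - u a =
      κ • (∫ t in a..b, A t) (u b) - κ • ∫ t in a..b, (∫ r in a..t, A r) (u' t) := by
  have hI : uIcc a b = Icc a b := uIcc_of_le hab
  rw [← smul_sub, ← integral_clm_apply_eq_primitive_sub hab hA hu hu',
    ← intervalIntegral.integral_smul,
    ← integral_eq_sub_of_hasDerivAt_of_le hab (fun t ht => (hu t ht).continuousWithinAt)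
      (fun t ht => (hu t (Ioo_subset_Icc_self ht)).hasDerivAt (Icc_mem_nhds ht.1 ht.2))
      ((hu'.mono hI.subset).intervalIntegrable)]
  exact integral_congr fun t ht => hode t (hI ▸ ht)

end Parts

theorem sq_mul_rpow_neg_half_add_rpow_half_mul {β : ℝ} (hβ : 0 < β) (Δ : ℝ) :
    β ^ 2 * (β ^ (-(1:ℝ)/2) + β ^ ((1:ℝ)/2) * Δ) * Δ = β ^ ((3:ℝ)/2) * (Δ + β * Δ ^ 2) := by
  have h₁ : β ^ ((1:ℝ)/2) = β ^ (-(1:ℝ)/2) * β := by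
    rw [← Real.rpow_add_one hβ.ne']; norm_num
  have h₃ : β ^ ((3:ℝ)/2) = β ^ (-(1:ℝ)/2) * β ^ 2 := by
    rw [← Real.rpow_natCast, ← Real.rpow_add hβ]; norm_num
  rw [h₁, h₃]; ring

theorem stmt11_general (N : ℕ) (M C β T_i T_f : ℝ) (hC : 0 < C)
    (hβ0 : 0 < β) (hT : T_i ≤ T_f)
    (A₁ : ℝ → Lop N) (c c' : ℝ → Hs N)
    (hA₁ : ContinuousOn A₁ (Set.Icc T_i T_f))
    (hc : ∀ t ∈ Set.Icc T_i T_f, HasDerivWithinAt c (c' t) (Set.Icc T_i T_f) t)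
    (hc' : ContinuousOn c' (Set.Icc T_i T_f))
    (hode : ∀ t ∈ Set.Icc T_i T_f, Complex.I • c' t = (β : ℂ) • (A₁ t) (c t))
    (hint : ∀ t ∈ Set.Icc T_i T_f,
      ‖∫ s in T_i..t, A₁ s‖ ≤ C * (β ^ (-(1:ℝ)/2) + β ^ ((1:ℝ)/2) * (t - T_i)))
    (hbd : ∀ t ∈ Set.Icc T_i T_f, ‖A₁ t‖ ≤ M)
    (hcbd : ∀ t ∈ Set.Icc T_i T_f, ‖c t‖ ≤ 1) :
    c T_f - c T_i =
        (-(Complex.I) * (β : ℂ)) • (∫ s in T_i..T_f, A₁ s) (c T_f)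
        + (Complex.I * (β : ℂ)) • ∫ s in T_i..T_f, (∫ r in T_i..s, A₁ r) (c' s) ∧
    ‖(-(Complex.I) * (β : ℂ)) • (∫ s in T_i..T_f, A₁ s) (c T_f)‖ ≤
        C * β * (β ^ (-(1:ℝ)/2) + β ^ ((1:ℝ)/2) * (T_f - T_i)) ∧
    ‖(Complex.I * (β : ℂ)) • ∫ s in T_i..T_f, (∫ r in T_i..s, A₁ r) (c' s)‖ ≤
        C * M * β ^ ((3:ℝ)/2) * ((T_f - T_i) + β * (T_f - T_i) ^ 2) := by
  set κ : ℂ := -Complex.I * β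
  set K := C * (β ^ (-(1:ℝ)/2) + β ^ ((1:ℝ)/2) * (T_f - T_i)) with hK
  have hκ : ‖κ‖ = β := by simp [κ, hβ0.le]
  have hode' : ∀ t ∈ Icc T_i T_f, c' t = κ • A₁ t (c t) := fun t ht => by
    rw [mul_smul, ← hode t ht, smul_smul]; simp
  have hB : ∀ t ∈ Icc T_i T_f, ‖∫ s in T_i..t, A₁ s‖ ≤ K := fun t ht =>
    (hint t ht).trans (by rw [hK]; gcongr; exact ht.2)
  have hc'bd : ∀ t ∈ Icc T_i T_f, ‖c' t‖ ≤ β * M := fun t ht => by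
    rw [hode' t ht, norm_smul, hκ, ← mul_one M]
    exact mul_le_mul_of_nonneg_left ((A₁ t).le_of_opNorm_le_of_le (hbd t ht) (hcbd t ht)) hβ0.le
  have hTf : T_f ∈ Icc T_i T_f := right_mem_Icc.2 hT
  refine ⟨?_, ?_, ?_⟩
  · rw [sub_eq_smul_primitive_apply_sub κ hT hA₁ hc hc' hode', sub_eq_add_neg, ← neg_smul]
    simp [κ]
  · calc _ ≤ β * (K * 1) := by
          rw [norm_smul, hκ]
          exact mul_le_mul_of_nonneg_left
            ((ContinuousLinearMap.le_of_opNorm_le_of_le _ (hB T_f hTf) (hcbd T_f hTf))) hβ0.le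
      _ = _ := by rw [hK]; ring
  · calc _ = β * ‖∫ s in T_i..T_f, (∫ r in T_i..s, A₁ r) (c' s)‖ := by simp [norm_smul, hβ0.le]
      _ ≤ β * (K * (β * M) * (T_f - T_i)) :=
          mul_le_mul_of_nonneg_left (norm_integral_clm_apply_le hT hB hc'bd) hβ0.le
      _ = _ := by
          rw [hK]
          linear_combination (C * M) * sq_mul_rpow_neg_half_add_rpow_half_mul hβ0 (T_f - T_i)

/-- integration-by-parts decomposition c(T_f) − c(T_i) = b₁ + b₂
with b₁ = (β/i)(∫_{T_i}^{T_f}A₁)c(T_f), b₂ = −(β/i)∫_{T_i}^{T_f}(∫_{T_i}^s A₁)c'(s)ds,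
and the corresponding bounds. -/
theorem stmt11 (N : ℕ) (M C β T_i T_f : ℝ) (hC : 0 < C) (hM : 0 ≤ M)
    (hβ0 : 0 < β) (hβ1 : β < 1) (hT : T_i ≤ T_f)
    (A₁ : ℝ → Lop N) (c c' : ℝ → Hs N)
    (hA₁ : ContinuousOn A₁ (Set.Icc T_i T_f))
    (hc : ∀ t ∈ Set.Icc T_i T_f, HasDerivWithinAt c (c' t) (Set.Icc T_i T_f) t)
    (hc' : ContinuousOn c' (Set.Icc T_i T_f))
    (hode : ∀ t ∈ Set.Icc T_i T_f, Complex.I • c' t = (β : ℂ) • (A₁ t) (c t))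
    (hint : ∀ t ∈ Set.Icc T_i T_f,
      ‖∫ s in T_i..t, A₁ s‖ ≤ C * (β ^ (-(1:ℝ)/2) + β ^ ((1:ℝ)/2) * (t - T_i)))
    (hbd : ∀ t ∈ Set.Icc T_i T_f, ‖A₁ t‖ ≤ M)
    (hcbd : ∀ t ∈ Set.Icc T_i T_f, ‖c t‖ ≤ 1) :
    c T_f - c T_i =
        (-(Complex.I) * (β : ℂ)) • (∫ s in T_i..T_f, A₁ s) (c T_f)
        + (Complex.I * (β : ℂ)) • ∫ s in T_i..T_f, (∫ r in T_i..s, A₁ r) (c' s) ∧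
    ‖(-(Complex.I) * (β : ℂ)) • (∫ s in T_i..T_f, A₁ s) (c T_f)‖ ≤
        C * β * (β ^ (-(1:ℝ)/2) + β ^ ((1:ℝ)/2) * (T_f - T_i)) ∧
    ‖(Complex.I * (β : ℂ)) • ∫ s in T_i..T_f, (∫ r in T_i..s, A₁ r) (c' s)‖ ≤
        C * M * β ^ ((3:ℝ)/2) * ((T_f - T_i) + β * (T_f - T_i) ^ 2) :=
  stmt11_general N M C β T_i T_f hC hβ0 hT A₁ c c' hA₁ hc hc' hode hint hbd hcbd
end
end

section
/- Let A^>(t) = Σ_{j≥j₀} (M_j e^{iω_j t} + M_j† e^{−iω_j t}) with ‖M_j‖T₀ ≤ j^{−1−δ} for some δ > 0 and all j ≥ j₀, where T₀ = β^{−1/2}. Let Ā₀^{>g} be the piecewise-constant interval average of A^> with window T₀. Then there is a constant C (depending only on δ, j₀) with ‖∫₀^t (A^>(s) − Ā₀^{>g}(s)) ds‖ ≤ C for all t ≥ 0. -/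
/-!
With `‖M_j‖ ≤ T₀⁻¹ j^{-1-δ}` the series for `A^>` converges uniformly, so `A^>` is continuous
and bounded by `B = 2 S / T₀`, where `S = ∑ j^{-1-δ}`. Over every full window `[k T₀, (k+1) T₀]`
the integral of `A^> - Ā₀^{>g}` vanishes, because there `Ā₀^{>g}` is the window average of `A^>`.
Hence `∫₀^t` reduces to the last, partial window, of length at most `T₀`, on which the integrand
is bounded by `2 B`; this gives the bound `2 B T₀ = 4 S`, independent of `β`, `N`, `M_j`, `ω_j`.
-/

open scoped Real
open MeasureTheory intervalIntegral Filter

noncomputable section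

/-- The averaging window T₀ = β^{-1/2}. -/
def T0 (β : ℝ) : ℝ := β ^ (-(1:ℝ)/2)

/-- The average of A over the interval [n·T₀, (n+1)·T₀]. -/
def avg {N : ℕ} (A : ℝ → Lop N) (T₀ : ℝ) (n : ℕ) : Lop N :=
  T₀⁻¹ • ∫ s in ((n : ℝ) * T₀)..(((n : ℝ) + 1) * T₀), A s

/-- The piecewise-constant global average: Ā^g(t) = Ā⁽ⁿ⁾ for n·T₀ ≤ t < (n+1)·T₀. -/
def pavg {N : ℕ} (A : ℝ → Lop N) (T₀ : ℝ) (t : ℝ) : Lop N :=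
  avg A T₀ ⌊t / T₀⌋₊

/-- The high-frequency part A^>(t) = Σ_{j ≥ j₀} (M_j e^{iω_j t} + M_j† e^{−iω_j t}). -/
def Aser {N : ℕ} (Mj : ℕ → Lop N) (ω : ℕ → ℝ) (j₀ : ℕ) (t : ℝ) : Lop N :=
  ∑' j : ℕ, if j₀ ≤ j then
    (Complex.exp (Complex.I * (ω j : ℂ) * (t : ℂ)) • Mj j +
      Complex.exp (-(Complex.I * (ω j : ℂ) * (t : ℂ))) • star (Mj j))
  else 0

open Set

section Windows

variable {N : ℕ} {A : ℝ → Lop N} {T : ℝ}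

lemma pavg_eq_avg_of_mem_Ico (hT : 0 < T) {k : ℕ} {s : ℝ} (hs : s ∈ Ico (k * T) ((k + 1) * T)) :
    pavg A T s = avg A T k := by
  have hk : (k : ℝ) ≤ s / T := by rw [le_div_iff₀ hT]; exact hs.1
  have hk' : s / T < k + 1 := by rw [div_lt_iff₀ hT]; exact hs.2
  rw [pavg, (Nat.floor_eq_iff (k.cast_nonneg.trans hk)).2 ⟨hk, hk'⟩]

lemma eqOn_sub_pavg_sub_avg (hT : 0 < T) {k : ℕ} {a b : ℝ}
    (ha : a ∈ Icc (k * T) ((k + 1) * T)) (hb : b ∈ Icc (k * T) ((k + 1) * T)) :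
    EqOn (fun s => A s - pavg A T s) (fun s => A s - avg A T k) (uIoo a b) := by
  intro s hs
  have hs' : s ∈ Ico (k * T) ((k + 1) * T) :=
    ⟨(le_min ha.1 hb.1).trans hs.1.le, hs.2.trans_le (max_le ha.2 hb.2)⟩
  simp only [pavg_eq_avg_of_mem_Ico hT hs']

lemma norm_avg_le (hT : 0 < T) {B : ℝ} (hB : ∀ s, ‖A s‖ ≤ B) (k : ℕ) : ‖avg A T k‖ ≤ B := by
  have hint := intervalIntegral.norm_integral_le_of_norm_le_const
    (a := k * T) (b := (k + 1) * T) fun s _ => hB s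
  rw [show (k + 1) * T - k * T = T by ring, abs_of_pos hT] at hint
  calc ‖avg A T k‖ = T⁻¹ * ‖∫ s in (k * T)..((k + 1) * T), A s‖ := by
        rw [avg, norm_smul, Real.norm_of_nonneg (inv_pos.2 hT).le]
    _ ≤ T⁻¹ * (B * T) := by gcongr
    _ = B := by field_simp

variable (hT : 0 < T) (hA : LocallyIntegrable A)
include hT hA

lemma intervalIntegrable_sub_pavg {k : ℕ} {a b : ℝ}
    (ha : a ∈ Icc (k * T) ((k + 1) * T)) (hb : b ∈ Icc (k * T) ((k + 1) * T)) :
    IntervalIntegrable (fun s => A s - pavg A T s) volume a b :=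
  (intervalIntegrable_congr_uIoo (eqOn_sub_pavg_sub_avg hT ha hb)).2
    ((hA.integrableOn_isCompact isCompact_uIcc).intervalIntegrable.sub intervalIntegrable_const)

lemma integral_sub_pavg_window (k : ℕ) :
    ∫ s in (k * T)..((k + 1) * T), (A s - pavg A T s) = 0 := by
  have hk : (k : ℝ) * T ≤ (k + 1) * T := by nlinarith
  rw [intervalIntegral.integral_congr_uIoo
      (eqOn_sub_pavg_sub_avg hT ⟨le_rfl, hk⟩ ⟨hk, le_rfl⟩),
    intervalIntegral.integral_sub
      (hA.integrableOn_isCompact isCompact_uIcc).intervalIntegrable intervalIntegrable_const,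
    intervalIntegral.integral_const, avg, smul_smul, show (k + 1) * T - k * T = T by ring,
    mul_inv_cancel₀ hT.ne', one_smul, sub_self]

lemma intervalIntegrable_sub_pavg_window (k : ℕ) :
    IntervalIntegrable (fun s => A s - pavg A T s) volume (k * T) (((k + 1 : ℕ) : ℝ) * T) := by
  have hk : (k : ℝ) * T ≤ (k + 1) * T := by nlinarith
  exact_mod_cast intervalIntegrable_sub_pavg hT hA ⟨le_rfl, hk⟩ ⟨hk, le_rfl⟩

lemma intervalIntegrable_sub_pavg_nat_mul (n : ℕ) :
    IntervalIntegrable (fun s => A s - pavg A T s) volume 0 (n * T) := by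
  simpa using IntervalIntegrable.trans_iterate (a := fun k : ℕ => (k : ℝ) * T) (n := n)
    fun k _ => intervalIntegrable_sub_pavg_window hT hA k

lemma integral_sub_pavg_nat_mul (n : ℕ) :
    ∫ s in (0 : ℝ)..(n * T), (A s - pavg A T s) = 0 := by
  have := intervalIntegral.sum_integral_adjacent_intervals
    (a := fun k : ℕ => (k : ℝ) * T) (n := n) fun k _ => intervalIntegrable_sub_pavg_window hT hA k
  simp only [Nat.cast_zero, zero_mul, Nat.cast_succ, integral_sub_pavg_window hT hA,
    Finset.sum_const_zero] at this
  exact this.symm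

theorem norm_integral_sub_pavg_le {B : ℝ} (hB : ∀ s, ‖A s‖ ≤ B) {t : ℝ} (ht : 0 ≤ t) :
    ‖∫ s in (0 : ℝ)..t, (A s - pavg A T s)‖ ≤ 2 * B * T := by
  set n := ⌊t / T⌋₊
  have hn : t ∈ Icc (n * T) ((n + 1) * T) := by
    refine ⟨(le_div_iff₀ hT).1 (Nat.floor_le (div_nonneg ht hT.le)), ?_⟩
    exact ((div_lt_iff₀ hT).1 (Nat.lt_floor_add_one (t / T))).le
  have hn0 : (n : ℝ) * T ∈ Icc (n * T) ((n + 1) * T) := ⟨le_rfl, by nlinarith⟩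
  rw [← intervalIntegral.integral_add_adjacent_intervals
      (intervalIntegrable_sub_pavg_nat_mul hT hA n) (intervalIntegrable_sub_pavg hT hA hn0 hn),
    integral_sub_pavg_nat_mul hT hA, zero_add,
    intervalIntegral.integral_congr_uIoo (eqOn_sub_pavg_sub_avg hT hn0 hn)]
  calc ‖∫ s in (n * T)..t, (A s - avg A T n)‖ ≤ (B + B) * |t - n * T| :=
        intervalIntegral.norm_integral_le_of_norm_le_const fun s _ =>
          (norm_sub_le _ _).trans (add_le_add (hB s) (norm_avg_le hT hB n))
    _ ≤ (B + B) * T := by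
        have hB0 : 0 ≤ B := (norm_nonneg _).trans (hB 0)
        gcongr
        rw [abs_of_nonneg (by linarith [hn.1])]
        linarith [hn.2]
    _ = 2 * B * T := by ring

end Windows

section Series

variable {N : ℕ}

lemma norm_exp_smul_add_exp_neg_smul_star_le (M : Lop N) {z : ℂ} (hz : z.re = 0) :
    ‖Complex.exp z • M + Complex.exp (-z) • star M‖ ≤ 2 * ‖M‖ := by
  have hstar : ‖star M‖ = ‖M‖ := by
    rw [ContinuousLinearMap.star_eq_adjoint, LinearIsometryEquiv.norm_map]
  calc ‖Complex.exp z • M + Complex.exp (-z) • star M‖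
      ≤ ‖Complex.exp z • M‖ + ‖Complex.exp (-z) • star M‖ := norm_add_le _ _
    _ = 2 * ‖M‖ := by
        rw [norm_smul, norm_smul, Complex.norm_exp, Complex.norm_exp, Complex.neg_re, hz, hstar]
        simp only [neg_zero, Real.exp_zero]
        ring

def aserTerm (Mj : ℕ → Lop N) (ω : ℕ → ℝ) (j₀ j : ℕ) (t : ℝ) : Lop N :=
  if j₀ ≤ j then
    (Complex.exp (Complex.I * (ω j : ℂ) * (t : ℂ)) • Mj j +
      Complex.exp (-(Complex.I * (ω j : ℂ) * (t : ℂ))) • star (Mj j))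
  else 0

variable {Mj : ℕ → Lop N} {ω : ℕ → ℝ} {j₀ : ℕ} {c : ℕ → ℝ}

lemma Aser_eq_tsum_aserTerm : Aser Mj ω j₀ = fun t => ∑' j, aserTerm Mj ω j₀ j t := rfl

lemma continuous_aserTerm (j : ℕ) : Continuous (aserTerm Mj ω j₀ j) := by
  unfold aserTerm
  split_ifs
  · fun_prop
  · exact continuous_const

variable (hM : ∀ j, j₀ ≤ j → ‖Mj j‖ ≤ c j) (hc : ∀ j, 0 ≤ c j)
include hM hc

lemma norm_aserTerm_le (j : ℕ) (t : ℝ) : ‖aserTerm Mj ω j₀ j t‖ ≤ 2 * c j := by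
  unfold aserTerm
  split_ifs with hj
  · refine (norm_exp_smul_add_exp_neg_smul_star_le _ (by simp)).trans ?_
    linarith [hM j hj]
  · simpa using hc j

variable (hcs : Summable c)
include hcs

lemma norm_Aser_le (t : ℝ) : ‖Aser Mj ω j₀ t‖ ≤ 2 * ∑' j, c j := by
  rw [← tsum_mul_left]
  exact tsum_of_norm_bounded (hcs.mul_left 2).hasSum (norm_aserTerm_le hM hc · t)

lemma continuous_Aser : Continuous (Aser Mj ω j₀) := by
  rw [Aser_eq_tsum_aserTerm]
  exact continuous_tsum continuous_aserTerm (hcs.mul_left 2) (norm_aserTerm_le hM hc)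

end Series

/-- with ‖M_j‖T₀ ≤ j^{−1−δ} for j ≥ j₀ and T₀ = β^{−1/2},
‖∫₀^t (A^>(s) − Ā₀^{>g}(s)) ds‖ ≤ C for all t ≥ 0, C depending only on δ, j₀. -/
theorem stmt14 (δ : ℝ) (hδ : 0 < δ) (j₀ : ℕ) :
    ∃ C > 0, ∀ (N : ℕ) (β : ℝ), 0 < β → β < 1 →
    ∀ (Mj : ℕ → Lop N) (ω : ℕ → ℝ),
    (∀ j : ℕ, j₀ ≤ j → ‖Mj j‖ * T0 β ≤ (j : ℝ) ^ (-(1 + δ))) →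
    ∀ t ≥ (0:ℝ),
      ‖∫ s in (0:ℝ)..t,
          (Aser Mj ω j₀ s - pavg (Aser Mj ω j₀) (T0 β) s)‖ ≤ C := by
  set S := ∑' j : ℕ, (j : ℝ) ^ (-(1 + δ))
  have hS : Summable fun j : ℕ => (j : ℝ) ^ (-(1 + δ)) :=
    Real.summable_nat_rpow.2 (by linarith)
  have hS0 : 0 ≤ S := tsum_nonneg fun j => by positivity
  refine ⟨4 * S + 1, by linarith, fun N β hβ _ Mj ω hM t ht => ?_⟩
  have hT : 0 < T0 β := Real.rpow_pos_of_pos hβ _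
  set c : ℕ → ℝ := fun j => (T0 β)⁻¹ * (j : ℝ) ^ (-(1 + δ))
  have hMc : ∀ j, j₀ ≤ j → ‖Mj j‖ ≤ c j := fun j hj =>
    (le_inv_mul_iff₀ hT).2 (by rw [mul_comm]; exact hM j hj)
  have hc : ∀ j, 0 ≤ c j := fun j => by positivity
  have hcs : Summable c := hS.mul_left _
  calc _ ≤ 2 * (2 * ∑' j, c j) * T0 β :=
        norm_integral_sub_pavg_le hT (continuous_Aser hMc hc hcs).locallyIntegrable
          (norm_Aser_le hMc hc hcs) ht
    _ = 4 * S := by rw [tsum_mul_left]; field_simp; ring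
    _ ≤ 4 * S + 1 := by linarith
end
end
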